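/- Fix a positive integer d. For ℓ ≥ 1, among the bad tuples (j¹, j², j³, j⁴) of sequences of length ℓ+1 in {1,…,d} with j^k_0 = 1 for all k ∈ {1,2,3,4}, let A_ℓ be the number of those with j^1_ℓ = j^2_ℓ = j^3_ℓ = j^4_ℓ, and let B_ℓ be the number of those for which there is a partition of {1,2,3,4} into two disjoint pairs {p,q} and {r,s} with j^p_ℓ = j^q_ℓ, j^r_ℓ = j^s_ℓ and j^p_ℓ ≠ j^r_ℓ. Then every such bad tuple is counted in exactly one of A_ℓ and B_ℓ, and A₁ = d, B₁ = 3(d² − d), and for all ℓ ≥ 1: A_{ℓ+1} = d·A_ℓ + d·B_ℓ and B_{ℓ+1} = 3(d² − d)·A_ℓ + (d² − d)·B_ℓ. -/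

import Mathlib

/-!
STATEMENT 7: Fix a positive integer `d`. For `ℓ ≥ 1`, among the bad tuples of sequences of
length `ℓ+1` in `{1,…,d}` starting at `1`, let `A_ℓ` count those whose four final values are
all equal and `B_ℓ` count those whose final values split into two pairs with distinct values.
Then every such bad tuple is counted in exactly one of `A_ℓ` and `B_ℓ`, `A₁ = d`,
`B₁ = 3(d² − d)`, and for all `ℓ ≥ 1`: `A_{ℓ+1} = d·A_ℓ + d·B_ℓ` and
`B_{ℓ+1} = 3(d² − d)·A_ℓ + (d² − d)·B_ℓ`.
-/

/-- At one step, the four pairs of consecutive values can be split into two disjoint pairs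
that agree both at time `i` and at time `i+1`. -/
def StepOK (u v : Fin 4 → ℕ) : Prop :=
  ∃ p q r s : Fin 4, ({p, q, r, s} : Finset (Fin 4)) = Finset.univ ∧
    u p = u q ∧ v p = v q ∧ u r = u s ∧ v r = v s

/-- A tuple of four sequences of length `ℓ+1` with entries in `{1, …, d}` is bad if the
pairing condition holds at every step `i ∈ {0, …, ℓ−1}`. -/
def BadTuple (d ℓ : ℕ) (j : Fin 4 → Fin (ℓ + 1) → ℕ) : Prop :=
  (∀ k i, j k i ∈ Finset.Icc 1 d) ∧
    ∀ i : Fin ℓ, StepOK (fun k => j k i.castSucc) (fun k => j k i.succ)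

/-- All four final values are equal. -/
def EndAll (ℓ : ℕ) (j : Fin 4 → Fin (ℓ + 1) → ℕ) : Prop :=
  j 0 (Fin.last ℓ) = j 1 (Fin.last ℓ) ∧ j 1 (Fin.last ℓ) = j 2 (Fin.last ℓ) ∧
    j 2 (Fin.last ℓ) = j 3 (Fin.last ℓ)

/-- The final values split into two disjoint pairs, equal within each pair and distinct
across the two pairs. -/
def EndSplit (ℓ : ℕ) (j : Fin 4 → Fin (ℓ + 1) → ℕ) : Prop :=
  ∃ p q r s : Fin 4, ({p, q, r, s} : Finset (Fin 4)) = Finset.univ ∧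
    j p (Fin.last ℓ) = j q (Fin.last ℓ) ∧ j r (Fin.last ℓ) = j s (Fin.last ℓ) ∧
    j p (Fin.last ℓ) ≠ j r (Fin.last ℓ)

/-- `A_ℓ`: the number of bad tuples starting at `1` whose final values are all equal. -/
noncomputable def Acount (d ℓ : ℕ) : ℕ :=
  Nat.card {j : Fin 4 → Fin (ℓ + 1) → ℕ //
    BadTuple d ℓ j ∧ (∀ k, j k 0 = 1) ∧ EndAll ℓ j}

/-- `B_ℓ`: the number of bad tuples starting at `1` whose final values split into two
pairs with distinct values. -/
noncomputable def Bcount (d ℓ : ℕ) : ℕ :=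
  Nat.card {j : Fin 4 → Fin (ℓ + 1) → ℕ //
    BadTuple d ℓ j ∧ (∀ k, j k 0 = 1) ∧ EndSplit ℓ j}

/-!
Every column of a bad tuple started at `1` is constant on both blocks of one of the three
perfect matchings of `{1, 2, 3, 4}`: the first column is constant, and each later one shares a
matching with its predecessor. Such a column is either constant, or constant on the blocks of
exactly one matching (two matchings together force all four values to agree), which gives the
dichotomy. A tuple with last column `u` extends by a column `v` iff `u` and `v` have a common
matching. Hence a constant `v` may follow every `u` (`d` choices); a split `v` may follow a
constant `u` freely (`3 (d² - d)` choices: a matching and two distinct values) but a split `u`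
only with the matching of `u` (`d² - d` choices).
-/

namespace BadTuple

/-- The `t`-th perfect matching of `Fin 4` pairs `0` with `t.succ`. -/
def PairedBy : Fin 3 → (Fin 4 → ℕ) → Prop
  | 0, v => v 0 = v 1 ∧ v 2 = v 3
  | 1, v => v 0 = v 2 ∧ v 1 = v 3
  | 2, v => v 0 = v 3 ∧ v 1 = v 2

def AllEq (v : Fin 4 → ℕ) : Prop := v 0 = v 1 ∧ v 1 = v 2 ∧ v 2 = v 3

def SplitPairs (v : Fin 4 → ℕ) : Prop :=
  ∃ p q r s : Fin 4, ({p, q, r, s} : Finset (Fin 4)) = Finset.univ ∧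
    v p = v q ∧ v r = v s ∧ v p ≠ v r

instance : ∀ t, DecidablePred (PairedBy t)
  | 0, _ => instDecidableAnd
  | 1, _ => instDecidableAnd
  | 2, _ => instDecidableAnd

instance : DecidablePred AllEq := fun _ => instDecidableAnd

instance : DecidablePred SplitPairs := fun _ => by unfold SplitPairs; infer_instance

theorem stepOK_iff {u v : Fin 4 → ℕ} : StepOK u v ↔ ∃ t, PairedBy t u ∧ PairedBy t v := by
  constructor
  · rintro ⟨p, q, r, s, hpqrs, hu₁, hv₁, hu₂, hv₂⟩
    have : (PairedBy 0 u ∧ PairedBy 0 v) ∨ (PairedBy 1 u ∧ PairedBy 1 v) ∨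
        (PairedBy 2 u ∧ PairedBy 2 v) := by
      simp only [PairedBy]
      fin_cases p <;> fin_cases q <;> fin_cases r <;> fin_cases s <;>
        first
          | exact absurd hpqrs (by decide)
          | (simp only [Fin.reduceFinMk] at *; omega)
    rcases this with h | h | h
    exacts [⟨0, h⟩, ⟨1, h⟩, ⟨2, h⟩]
  · rintro ⟨t, hu, hv⟩
    fin_cases t
    exacts [⟨0, 1, 2, 3, by decide, hu.1, hv.1, hu.2, hv.2⟩,
      ⟨0, 2, 1, 3, by decide, hu.1, hv.1, hu.2, hv.2⟩,
      ⟨0, 3, 1, 2, by decide, hu.1, hv.1, hu.2, hv.2⟩]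

theorem splitPairs_iff {v : Fin 4 → ℕ} : SplitPairs v ↔ (∃ t, PairedBy t v) ∧ ¬AllEq v := by
  constructor
  · rintro ⟨p, q, r, s, hpqrs, h₁, h₂, hne⟩
    have : ((PairedBy 0 v ∨ PairedBy 1 v ∨ PairedBy 2 v) ∧ ¬AllEq v) := by
      simp only [PairedBy, AllEq]
      fin_cases p <;> fin_cases q <;> fin_cases r <;> fin_cases s <;>
        first
          | exact absurd hpqrs (by decide)
          | (simp only [Fin.reduceFinMk] at *; omega)
    obtain ⟨h | h | h, hne⟩ := this
    exacts [⟨⟨0, h⟩, hne⟩, ⟨⟨1, h⟩, hne⟩, ⟨⟨2, h⟩, hne⟩]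
  · rintro ⟨⟨t, ht⟩, hne⟩
    simp only [AllEq] at hne
    fin_cases t <;> simp only [PairedBy] at ht
    · exact ⟨0, 1, 2, 3, by decide, ht.1, ht.2, by omega⟩
    · exact ⟨0, 2, 1, 3, by decide, ht.1, ht.2, by omega⟩
    · exact ⟨0, 3, 1, 2, by decide, ht.1, ht.2, by omega⟩

theorem AllEq.pairedBy {v : Fin 4 → ℕ} (h : AllEq v) (t : Fin 3) : PairedBy t v := by
  obtain ⟨h₁, h₂, h₃⟩ := h
  fin_cases t <;> simp only [PairedBy] <;> omega

theorem allEq_of_pairedBy_of_ne {v : Fin 4 → ℕ} {t t' : Fin 3} (h : PairedBy t v)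
    (h' : PairedBy t' v) (htt' : t ≠ t') : AllEq v := by
  unfold AllEq
  fin_cases t <;> fin_cases t' <;> simp only [PairedBy] at h h' <;> omega

theorem not_allEq_iff_splitPairs {v : Fin 4 → ℕ} (h : ∃ t, PairedBy t v) :
    ¬AllEq v ↔ SplitPairs v := by
  rw [splitPairs_iff]
  exact ⟨fun hne => ⟨h, hne⟩, And.right⟩

theorem stepOK_and_allEq_iff {u v : Fin 4 → ℕ} (hu : ∃ t, PairedBy t u) :
    StepOK u v ∧ AllEq v ↔ AllEq v :=
  ⟨And.right, fun hv => ⟨stepOK_iff.2 (hu.imp fun t ht => ⟨ht, hv.pairedBy t⟩), hv⟩⟩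

theorem stepOK_and_splitPairs_iff_of_allEq {u v : Fin 4 → ℕ} (hu : AllEq u) :
    StepOK u v ∧ SplitPairs v ↔ SplitPairs v :=
  ⟨And.right, fun hv =>
    ⟨stepOK_iff.2 ((splitPairs_iff.1 hv).1.imp fun t ht => ⟨hu.pairedBy t, ht⟩), hv⟩⟩

theorem stepOK_and_splitPairs_iff {u v : Fin 4 → ℕ} {t : Fin 3} (hu : PairedBy t u)
    (hne : ¬AllEq u) : StepOK u v ∧ SplitPairs v ↔ PairedBy t v ∧ ¬AllEq v := by
  rw [splitPairs_iff, stepOK_iff]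
  constructor
  · rintro ⟨⟨t', hu', hv'⟩, -, hv⟩
    obtain rfl : t' = t := by_contra fun h => hne (allEq_of_pairedBy_of_ne hu' hu h)
    exact ⟨hv', hv⟩
  · rintro ⟨hv, hv'⟩
    exact ⟨⟨t, hu, hv⟩, ⟨t, hv⟩, hv'⟩

def box (d : ℕ) : Finset (Fin 4 → ℕ) := Fintype.piFinset fun _ => Finset.Icc 1 d

def pairCol : Fin 3 → ℕ → ℕ → Fin 4 → ℕ
  | 0, a, b => ![a, a, b, b]
  | 1, a, b => ![a, b, a, b]
  | 2, a, b => ![a, b, b, a]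

theorem card_filter_allEq_box (d : ℕ) : ((box d).filter AllEq).card = d := by
  suffices ((box d).filter AllEq).card = (Finset.Icc 1 d).card by simpa using this
  refine Finset.card_nbij' (fun v => v 0) (fun a _ => a) ?_ ?_ ?_ ?_
  · intro v hv
    exact Fintype.mem_piFinset.1 (Finset.mem_filter.1 hv).1 0
  · intro a ha
    simp only [Finset.mem_coe, Finset.mem_filter, box, Fintype.mem_piFinset]
    exact ⟨fun _ => ha, rfl, rfl, rfl⟩
  · intro v hv
    obtain ⟨h₁, h₂, h₃⟩ := (Finset.mem_filter.1 hv).2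
    funext k
    fin_cases k <;> simp only [Fin.isValue, Fin.zero_eta, Fin.mk_one, Fin.reduceFinMk] <;> omega
  · intro a _
    rfl

theorem card_filter_pairedBy_not_allEq_box (d : ℕ) (t : Fin 3) :
    ((box d).filter fun v => PairedBy t v ∧ ¬AllEq v).card = d ^ 2 - d := by
  suffices ((box d).filter fun v => PairedBy t v ∧ ¬AllEq v).card = (Finset.Icc 1 d).offDiag.card by
    simpa [Finset.offDiag_card, sq] using this
  -- `![2, 1, 1] t` is a coordinate outside the block of `0`
  refine Finset.card_nbij' (fun v => (v 0, v (![2, 1, 1] t))) (fun ab => pairCol t ab.1 ab.2)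
    ?_ ?_ ?_ ?_
  · intro v hv
    simp only [Finset.mem_coe, Finset.mem_filter, box, Fintype.mem_piFinset] at hv
    simp only [Finset.coe_offDiag, Set.mem_offDiag, Finset.mem_coe]
    obtain ⟨hbox, hpair, hne⟩ := hv
    refine ⟨hbox 0, hbox _, fun h => hne ?_⟩
    simp only [AllEq]
    fin_cases t <;>
      simp only [PairedBy, Fin.isValue, Fin.zero_eta, Fin.mk_one, Fin.reduceFinMk, Nat.succ_eq_add_one,
        Nat.reduceAdd, Matrix.cons_val_zero, Matrix.cons_val_one, Matrix.cons_val] at hpair h ⊢ <;> omega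
  · rintro ⟨a, b⟩ hab
    simp only [Finset.coe_offDiag, Set.mem_offDiag, Finset.mem_coe] at hab
    simp only [Finset.mem_coe, Finset.mem_filter, box, Fintype.mem_piFinset]
    obtain ⟨ha, hb, hab⟩ := hab
    rw [Finset.mem_Icc] at ha hb
    fin_cases t <;> simp [pairCol, PairedBy, AllEq, Fin.forall_fin_succ, ha, hb, hab]
  · intro v hv
    simp only [Finset.mem_coe, Finset.mem_filter, box, Fintype.mem_piFinset] at hv
    obtain ⟨-, hpair, -⟩ := hv
    funext k
    fin_cases t <;> simp only [PairedBy] at hpair <;> fin_cases k <;>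
      simp only [pairCol, Fin.isValue, Fin.zero_eta, Fin.mk_one, Fin.reduceFinMk, Nat.succ_eq_add_one,
        Nat.reduceAdd, Matrix.cons_val_zero, Matrix.cons_val_one, Matrix.cons_val] <;> omega
  · rintro ⟨a, b⟩ -
    fin_cases t <;> rfl

theorem card_filter_splitPairs_box (d : ℕ) :
    ((box d).filter SplitPairs).card = 3 * (d ^ 2 - d) := by
  have hunion : (box d).filter SplitPairs =
      Finset.univ.biUnion fun t => (box d).filter fun v => PairedBy t v ∧ ¬AllEq v := by
    ext v
    simp only [Finset.mem_filter, Finset.mem_biUnion, Finset.mem_univ, true_and,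
      splitPairs_iff]
    constructor
    · rintro ⟨hv, ⟨t, ht⟩, hne⟩
      exact ⟨t, hv, ht, hne⟩
    · rintro ⟨t, hv, ht, hne⟩
      exact ⟨hv, ⟨t, ht⟩, hne⟩
  have hdisj : ((Finset.univ : Finset (Fin 3)) : Set (Fin 3)).PairwiseDisjoint
      fun t => (box d).filter fun v => PairedBy t v ∧ ¬AllEq v := by
    intro t _ t' _ htt'
    exact Finset.disjoint_filter.2 fun v _ h h' => h.2 (allEq_of_pairedBy_of_ne h.1 h'.1 htt')
  rw [hunion, Finset.card_biUnion hdisj]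
  simp [card_filter_pairedBy_not_allEq_box]

def lastCol {n : ℕ} (j : Fin 4 → Fin (n + 1) → ℕ) : Fin 4 → ℕ := fun k => j k (Fin.last n)

def snocCol {n : ℕ} (j : Fin 4 → Fin (n + 1) → ℕ) (v : Fin 4 → ℕ) :
    Fin 4 → Fin (n + 2) → ℕ :=
  fun k => Fin.snoc (j k) (v k)

def initCols {n : ℕ} (j : Fin 4 → Fin (n + 2) → ℕ) : Fin 4 → Fin (n + 1) → ℕ :=
  fun k => Fin.init (j k)

@[simp] theorem snocCol_castSucc {n : ℕ} (j : Fin 4 → Fin (n + 1) → ℕ) (v : Fin 4 → ℕ)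
    (k : Fin 4) (i : Fin (n + 1)) : snocCol j v k i.castSucc = j k i :=
  Fin.snoc_castSucc ..

@[simp] theorem snocCol_last {n : ℕ} (j : Fin 4 → Fin (n + 1) → ℕ) (v : Fin 4 → ℕ)
    (k : Fin 4) : snocCol j v k (Fin.last (n + 1)) = v k :=
  Fin.snoc_last ..

@[simp] theorem lastCol_snocCol {n : ℕ} (j : Fin 4 → Fin (n + 1) → ℕ) (v : Fin 4 → ℕ) :
    lastCol (snocCol j v) = v :=
  funext (snocCol_last j v)

@[simp] theorem initCols_snocCol {n : ℕ} (j : Fin 4 → Fin (n + 1) → ℕ) (v : Fin 4 → ℕ) :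
    initCols (snocCol j v) = j :=
  funext fun k => Fin.init_snoc (α := fun _ => ℕ) (v k) (j k)

@[simp] theorem snocCol_initCols_lastCol {n : ℕ} (j : Fin 4 → Fin (n + 2) → ℕ) :
    snocCol (initCols j) (lastCol j) = j :=
  funext fun k => Fin.snoc_init_self (j k)

theorem badTuple_snocCol_iff {d n : ℕ} {j : Fin 4 → Fin (n + 1) → ℕ} {v : Fin 4 → ℕ} :
    BadTuple d (n + 1) (snocCol j v) ↔ BadTuple d n j ∧ v ∈ box d ∧ StepOK (lastCol j) v := by
  simp only [BadTuple, box, Fintype.mem_piFinset]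
  constructor
  · rintro ⟨hbox, hstep⟩
    refine ⟨⟨fun k i => ?_, fun i => ?_⟩, fun k => ?_, ?_⟩
    · simpa using hbox k i.castSucc
    · simpa only [Fin.succ_castSucc, snocCol_castSucc] using hstep i.castSucc
    · simpa using hbox k (Fin.last _)
    · have := hstep (Fin.last n)
      simp only [Fin.succ_last, snocCol_castSucc, snocCol_last] at this
      exact this
  · rintro ⟨⟨hbox, hstep⟩, hv, hlast⟩
    refine ⟨fun k i => ?_, fun i => ?_⟩
    · cases i using Fin.lastCases <;> simp [hv, hbox]
    · cases i using Fin.lastCases with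
      | last =>
        simp only [Fin.succ_last, snocCol_castSucc, snocCol_last]
        exact hlast
      | cast i => simpa only [Fin.succ_castSucc, snocCol_castSucc] using hstep i

instance (u v : Fin 4 → ℕ) : Decidable (StepOK u v) := by unfold StepOK; infer_instance

instance (d ℓ : ℕ) : DecidablePred (BadTuple d ℓ) := fun _ => by unfold BadTuple; infer_instance

def admissible (d ℓ : ℕ) : Finset (Fin 4 → Fin (ℓ + 1) → ℕ) :=
  (Fintype.piFinset fun _ => Fintype.piFinset fun _ => Finset.Icc 1 d).filter
    fun j => BadTuple d ℓ j ∧ ∀ k, j k 0 = 1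

theorem mem_admissible {d ℓ : ℕ} {j : Fin 4 → Fin (ℓ + 1) → ℕ} :
    j ∈ admissible d ℓ ↔ BadTuple d ℓ j ∧ ∀ k, j k 0 = 1 := by
  simp only [admissible, Finset.mem_filter, Fintype.mem_piFinset, and_iff_right_iff_imp]
  exact fun h => h.1.1

theorem snocCol_mem_admissible_iff {d n : ℕ} {j : Fin 4 → Fin (n + 1) → ℕ} {v : Fin 4 → ℕ} :
    snocCol j v ∈ admissible d (n + 1) ↔
      j ∈ admissible d n ∧ v ∈ box d ∧ StepOK (lastCol j) v := by
  have hstart : ∀ k, snocCol j v k 0 = j k 0 := fun k => snocCol_castSucc j v k 0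
  simp only [mem_admissible, badTuple_snocCol_iff, hstart]
  tauto

theorem exists_pairedBy_lastCol {d n : ℕ} {j : Fin 4 → Fin (n + 1) → ℕ}
    (hj : j ∈ admissible d n) : ∃ t, PairedBy t (lastCol j) := by
  cases n with
  | zero =>
    have h : ∀ k, lastCol j k = 1 := (mem_admissible.1 hj).2
    exact ⟨0, AllEq.pairedBy ⟨(h 0).trans (h 1).symm, (h 1).trans (h 2).symm,
      (h 2).trans (h 3).symm⟩ 0⟩
  | succ n =>
    rw [← snocCol_initCols_lastCol j, snocCol_mem_admissible_iff] at hj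
    obtain ⟨t, -, ht⟩ := stepOK_iff.1 hj.2.2
    exact ⟨t, ht⟩

theorem card_filter_admissible_succ (d n : ℕ) (P : (Fin 4 → ℕ) → Prop) [DecidablePred P] :
    ((admissible d (n + 1)).filter fun j => P (lastCol j)).card =
      ∑ j ∈ admissible d n, ((box d).filter fun v => StepOK (lastCol j) v ∧ P v).card := by
  rw [← Finset.card_sigma]
  refine Finset.card_nbij' (fun j => ⟨initCols j, lastCol j⟩) (fun jv => snocCol jv.1 jv.2)
    ?_ ?_ ?_ ?_
  · intro j hj
    obtain ⟨hj, hP⟩ := Finset.mem_filter.1 hj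
    rw [← snocCol_initCols_lastCol j, snocCol_mem_admissible_iff] at hj
    simp only [Finset.mem_coe, Finset.mem_sigma, Finset.mem_filter]
    exact ⟨hj.1, hj.2.1, hj.2.2, hP⟩
  · rintro ⟨j, v⟩ hjv
    simp only [Finset.mem_coe, Finset.mem_sigma, Finset.mem_filter] at hjv
    simp only [Finset.mem_coe, Finset.mem_filter, snocCol_mem_admissible_iff, lastCol_snocCol]
    exact ⟨⟨hjv.1, hjv.2.1, hjv.2.2.1⟩, hjv.2.2.2⟩
  · intro j _
    exact snocCol_initCols_lastCol j
  · rintro ⟨j, v⟩ _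
    simp only [initCols_snocCol, lastCol_snocCol]

theorem filter_not_allEq_admissible (d n : ℕ) :
    ((admissible d n).filter fun j => ¬AllEq (lastCol j)) =
      (admissible d n).filter fun j => SplitPairs (lastCol j) :=
  Finset.filter_congr fun _ hj => not_allEq_iff_splitPairs (exists_pairedBy_lastCol hj)

theorem natCard_eq_card_filter_admissible (d ℓ : ℕ) (P : (Fin 4 → ℕ) → Prop)
    [DecidablePred P] :
    Nat.card {j : Fin 4 → Fin (ℓ + 1) → ℕ // BadTuple d ℓ j ∧ (∀ k, j k 0 = 1) ∧ P (lastCol j)} =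
      ((admissible d ℓ).filter fun j => P (lastCol j)).card := by
  rw [← Nat.card_eq_finsetCard]
  exact Nat.card_congr (Equiv.subtypeEquivRight fun j => by
    simp only [Finset.mem_filter, mem_admissible, and_assoc])

theorem Acount_eq_card (d ℓ : ℕ) :
    Acount d ℓ = ((admissible d ℓ).filter fun j => AllEq (lastCol j)).card :=
  natCard_eq_card_filter_admissible d ℓ AllEq

theorem Bcount_eq_card (d ℓ : ℕ) :
    Bcount d ℓ = ((admissible d ℓ).filter fun j => SplitPairs (lastCol j)).card :=
  natCard_eq_card_filter_admissible d ℓ SplitPairs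

theorem Acount_succ (d n : ℕ) : Acount d (n + 1) = d * Acount d n + d * Bcount d n := by
  have hfibre : ∀ j ∈ admissible d n,
      ((box d).filter fun v => StepOK (lastCol j) v ∧ AllEq v).card = d := fun j hj => by
    rw [Finset.filter_congr fun v _ => stepOK_and_allEq_iff (exists_pairedBy_lastCol hj),
      card_filter_allEq_box]
  rw [Acount_eq_card, card_filter_admissible_succ, Finset.sum_congr rfl hfibre,
    Finset.sum_const, smul_eq_mul, ← mul_add, Acount_eq_card, Bcount_eq_card,
    ← filter_not_allEq_admissible, Finset.card_filter_add_card_filter_not, mul_comm]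

theorem Bcount_succ (d n : ℕ) :
    Bcount d (n + 1) = 3 * (d ^ 2 - d) * Acount d n + (d ^ 2 - d) * Bcount d n := by
  have hfibre_allEq : ∀ j ∈ (admissible d n).filter fun j => AllEq (lastCol j),
      ((box d).filter fun v => StepOK (lastCol j) v ∧ SplitPairs v).card = 3 * (d ^ 2 - d) :=
    fun j hj => by
      rw [Finset.filter_congr fun v _ =>
          stepOK_and_splitPairs_iff_of_allEq (Finset.mem_filter.1 hj).2,
        card_filter_splitPairs_box]
  have hfibre_split : ∀ j ∈ (admissible d n).filter fun j => SplitPairs (lastCol j),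
      ((box d).filter fun v => StepOK (lastCol j) v ∧ SplitPairs v).card = d ^ 2 - d :=
    fun j hj => by
      obtain ⟨⟨t, ht⟩, hne⟩ := splitPairs_iff.1 (Finset.mem_filter.1 hj).2
      rw [Finset.filter_congr fun v _ => stepOK_and_splitPairs_iff ht hne,
        card_filter_pairedBy_not_allEq_box]
  rw [Bcount_eq_card, card_filter_admissible_succ,
    ← Finset.sum_filter_add_sum_filter_not _ fun j => AllEq (lastCol j),
    filter_not_allEq_admissible, Finset.sum_congr rfl hfibre_allEq,
    Finset.sum_congr rfl hfibre_split, Finset.sum_const, Finset.sum_const, smul_eq_mul,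
    smul_eq_mul, ← Acount_eq_card, ← Bcount_eq_card, mul_comm (Acount d n), mul_comm (Bcount d n)]

theorem admissible_zero {d : ℕ} (hd : 1 ≤ d) : admissible d 0 = {fun _ _ => 1} := by
  ext j
  rw [mem_admissible, Finset.mem_singleton]
  constructor
  · rintro ⟨-, h0⟩
    funext k i
    rw [Fin.fin_one_eq_zero i]
    exact h0 k
  · rintro rfl
    exact ⟨⟨fun _ _ => Finset.mem_Icc.2 ⟨le_rfl, hd⟩, fun i => i.elim0⟩, fun _ => rfl⟩

theorem Acount_zero {d : ℕ} (hd : 1 ≤ d) : Acount d 0 = 1 := by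
  rw [Acount_eq_card, admissible_zero hd, Finset.filter_singleton, if_pos ⟨rfl, rfl, rfl⟩]
  rfl

theorem Bcount_zero {d : ℕ} (hd : 1 ≤ d) : Bcount d 0 = 0 := by
  rw [Bcount_eq_card, admissible_zero hd, Finset.filter_singleton,
    if_neg fun h => (splitPairs_iff.1 h).2 ⟨rfl, rfl, rfl⟩]
  rfl

end BadTuple

theorem bad_tuple_recursion (d : ℕ) (hd : 1 ≤ d) :
    (∀ ℓ : ℕ, 1 ≤ ℓ → ∀ j : Fin 4 → Fin (ℓ + 1) → ℕ,
      BadTuple d ℓ j → (∀ k, j k 0 = 1) → Xor' (EndAll ℓ j) (EndSplit ℓ j)) ∧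
    Acount d 1 = d ∧
    Bcount d 1 = 3 * (d ^ 2 - d) ∧
    (∀ ℓ : ℕ, 1 ≤ ℓ → Acount d (ℓ + 1) = d * Acount d ℓ + d * Bcount d ℓ) ∧
    (∀ ℓ : ℕ, 1 ≤ ℓ →
      Bcount d (ℓ + 1) = 3 * (d ^ 2 - d) * Acount d ℓ + (d ^ 2 - d) * Bcount d ℓ) := by
  open BadTuple in
  refine ⟨fun ℓ _ j hj h0 => ?_, ?_, ?_, fun ℓ _ => Acount_succ d ℓ, fun ℓ _ => Bcount_succ d ℓ⟩
  · exact xor_iff_not_iff'.2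
      (not_allEq_iff_splitPairs (exists_pairedBy_lastCol (mem_admissible.2 ⟨hj, h0⟩)))
  · simp [Acount_succ, Acount_zero hd, Bcount_zero hd]
  · simp [Bcount_succ, Acount_zero hd, Bcount_zero hd]
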